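/- arXiv:2212.10052 — 3 statements merged into one kernel-verified Lean document; each statement's English description precedes it below -/
import Mathlib

section
/- Let (M, γ) be a closed oriented 2-dimensional Riemannian manifold of constant Gauss curvature ε and let L(ξ)_A = D_A D^C ξ_C + ½(−Δξ_A − ε ξ_A) + ε ξ_A (equivalently L = D∘div₁ − div₂∘C + ε). Then every ξ in the kernel of L satisfies D_A ξ^A = 0, and the kernel of L consists exactly of the harmonic 1-forms, i.e. ξ with D^A ξ_A = 0 and ε^{AB} D_A ξ_B = 0. In particular dim ker L = 2g where g is the genus of M. -/
/-!
Taking the divergence of `L ξ = 0` gives `½ Δ (div ξ) = 0`, so `div ξ` is harmonic with vanishing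
integral, hence zero. For divergence-free `ξ`, `L ξ = 0` is the eigenvalue equation `Δ ξ = ε ξ`.
In the Hodge decomposition `ξ = D ψ + D^⊥ φ + r` the gradient part drops out since `Δ ψ = div ξ = 0`,
and the eigenvalue equation leaves `D^⊥ (Δ φ) = 0`; taking the curl gives `Δ² φ = 0`, so `Δ φ = 0`
and `curl ξ = -Δ φ = 0`.
-/

section HarmonicOneForms

variable {Sc F : Type*} [AddCommGroup Sc] [Module ℝ Sc] [AddCommGroup F] [Module ℝ F]
  {ε : ℝ} {grad Dperp : Sc →ₗ[ℝ] F} {divF curl : F →ₗ[ℝ] Sc}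
  {lapS : Sc →ₗ[ℝ] Sc} {lapF : F →ₗ[ℝ] F} {intS : Sc →ₗ[ℝ] ℝ} {L : F →ₗ[ℝ] F}

theorem divF_apply_L
    (hL : ∀ ξ, L ξ = grad (divF ξ) + (1 / 2 : ℝ) • (-(lapF ξ) - ε • ξ) + ε • ξ)
    (hdivgrad : ∀ f, divF (grad f) = lapS f)
    (hdivlap : ∀ ξ, divF (lapF ξ) = lapS (divF ξ) + ε • divF ξ) (ξ : F) :
    divF (L ξ) = (1 / 2 : ℝ) • lapS (divF ξ) := by
  rw [hL]
  simp only [map_add, map_smul, map_sub, map_neg, hdivgrad, hdivlap]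
  module

theorem divF_eq_zero_of_L_eq_zero
    (hL : ∀ ξ, L ξ = grad (divF ξ) + (1 / 2 : ℝ) • (-(lapF ξ) - ε • ξ) + ε • ξ)
    (hdivgrad : ∀ f, divF (grad f) = lapS f)
    (hdivlap : ∀ ξ, divF (lapF ξ) = lapS (divF ξ) + ε • divF ξ)
    (hintdiv : ∀ ξ, intS (divF ξ) = 0) (hconst : ∀ f, lapS f = 0 → intS f = 0 → f = 0)
    {ξ : F} (h : L ξ = 0) : divF ξ = 0 := by
  have hlap : (1 / 2 : ℝ) • lapS (divF ξ) = 0 := by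
    rw [← divF_apply_L hL hdivgrad hdivlap, h, map_zero]
  exact hconst _ ((smul_eq_zero.mp hlap).resolve_left (by norm_num)) (hintdiv ξ)

theorem L_eq_zero_iff_of_divF_eq_zero
    (hL : ∀ ξ, L ξ = grad (divF ξ) + (1 / 2 : ℝ) • (-(lapF ξ) - ε • ξ) + ε • ξ)
    {ξ : F} (hd : divF ξ = 0) : L ξ = 0 ↔ lapF ξ = ε • ξ := by
  have hLξ : L ξ = (1 / 2 : ℝ) • (ε • ξ - lapF ξ) := by
    rw [hL, hd, map_zero]
    module
  rw [hLξ, smul_eq_zero, sub_eq_zero, eq_comm (a := ε • ξ)]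
  norm_num

theorem exists_eq_Dperp_add_harmonic_of_divF_eq_zero
    (hdivgrad : ∀ f, divF (grad f) = lapS f) (hdivperp : ∀ f, divF (Dperp f) = 0)
    (hgradconst : ∀ f, lapS f = 0 → grad f = 0)
    (hHodge : ∀ ξ : F, ∃ ψ φ r, divF r = 0 ∧ curl r = 0 ∧ ξ = grad ψ + Dperp φ + r)
    {ξ : F} (hd : divF ξ = 0) : ∃ φ r, divF r = 0 ∧ curl r = 0 ∧ ξ = Dperp φ + r := by
  obtain ⟨ψ, φ, r, hr_div, hr_curl, rfl⟩ := hHodge ξ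
  have hψ : lapS ψ = 0 := by
    simpa only [map_add, hdivgrad, hdivperp, hr_div, add_zero] using hd
  exact ⟨φ, r, hr_div, hr_curl, by rw [hgradconst ψ hψ, zero_add]⟩

theorem curl_eq_zero_of_lapF_eq_smul
    (hdivgrad : ∀ f, divF (grad f) = lapS f) (hdivperp : ∀ f, divF (Dperp f) = 0)
    (hcurlperp : ∀ f, curl (Dperp f) = - lapS f)
    (hlapDperp : ∀ f, lapF (Dperp f) = Dperp (lapS f) + ε • Dperp f)
    (hharm : ∀ r, divF r = 0 → curl r = 0 → lapF r = ε • r)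
    (hintlap : ∀ f, intS (lapS f) = 0) (hconst : ∀ f, lapS f = 0 → intS f = 0 → f = 0)
    (hgradconst : ∀ f, lapS f = 0 → grad f = 0)
    (hHodge : ∀ ξ : F, ∃ ψ φ r, divF r = 0 ∧ curl r = 0 ∧ ξ = grad ψ + Dperp φ + r)
    {ξ : F} (hd : divF ξ = 0) (heig : lapF ξ = ε • ξ) : curl ξ = 0 := by
  obtain ⟨φ, r, hr_div, hr_curl, rfl⟩ :=
    exists_eq_Dperp_add_harmonic_of_divF_eq_zero hdivgrad hdivperp hgradconst hHodge hd
  have hDperp : Dperp (lapS φ) = 0 := by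
    rw [map_add, hlapDperp, hharm r hr_div hr_curl, smul_add] at heig
    simpa only [add_assoc, add_eq_right] using heig
  have hlapφ : lapS φ = 0 := by
    refine hconst _ ?_ (hintlap φ)
    simpa only [hcurlperp, map_zero, neg_eq_zero] using congrArg curl hDperp
  rw [map_add, hcurlperp, hr_curl, hlapφ, neg_zero, add_zero]

end HarmonicOneForms

theorem stmt_9_general {Sc F : Type*} [AddCommGroup Sc] [Module ℝ Sc]
    [AddCommGroup F] [Module ℝ F]
    (ε : ℝ) (g : ℕ)
    (grad Dperp : Sc →ₗ[ℝ] F) (divF curl : F →ₗ[ℝ] Sc)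
    (lapS : Sc →ₗ[ℝ] Sc) (lapF : F →ₗ[ℝ] F)
    (intS : Sc →ₗ[ℝ] ℝ)
    (hdivgrad : ∀ f, divF (grad f) = lapS f)
    (hdivperp : ∀ f, divF (Dperp f) = 0)
    (hcurlperp : ∀ f, curl (Dperp f) = - lapS f)
    (hlapDperp : ∀ f, lapF (Dperp f) = Dperp (lapS f) + ε • Dperp f)
    (hharm : ∀ r, divF r = 0 → curl r = 0 → lapF r = ε • r)
    (hdivlap : ∀ ξ, divF (lapF ξ) = lapS (divF ξ) + ε • divF ξ)
    (hintdiv : ∀ ξ, intS (divF ξ) = 0)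
    (hintlap : ∀ f, intS (lapS f) = 0)
    (hconst : ∀ f, lapS f = 0 → intS f = 0 → f = 0)
    (hgradconst : ∀ f, lapS f = 0 → grad f = 0)
    (hHodge : ∀ ξ : F, ∃ ψ φ r, divF r = 0 ∧ curl r = 0 ∧ ξ = grad ψ + Dperp φ + r)
    (L : F →ₗ[ℝ] F)
    (hL : ∀ ξ, L ξ = grad (divF ξ) + (1 / 2 : ℝ) • (-(lapF ξ) - ε • ξ) + ε • ξ) :
    (∀ ξ, L ξ = 0 → divF ξ = 0)
    ∧ (LinearMap.ker L = LinearMap.ker divF ⊓ LinearMap.ker curl)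
    ∧ (Module.finrank ℝ ↥(LinearMap.ker divF ⊓ LinearMap.ker curl) = 2 * g →
        Module.finrank ℝ ↥(LinearMap.ker L) = 2 * g) := by
  have hdiv : ∀ ξ, L ξ = 0 → divF ξ = 0 := fun ξ =>
    divF_eq_zero_of_L_eq_zero hL hdivgrad hdivlap hintdiv hconst
  have hker : LinearMap.ker L = LinearMap.ker divF ⊓ LinearMap.ker curl := by
    ext ξ
    simp only [LinearMap.mem_ker, Submodule.mem_inf]
    constructor
    · intro h
      have hd := hdiv ξ h
      have heig := (L_eq_zero_iff_of_divF_eq_zero hL hd).mp h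
      exact ⟨hd, curl_eq_zero_of_lapF_eq_smul hdivgrad hdivperp hcurlperp hlapDperp hharm
        hintlap hconst hgradconst hHodge hd heig⟩
    · rintro ⟨hd, hc⟩
      exact (L_eq_zero_iff_of_divF_eq_zero hL hd).mpr (hharm ξ hd hc)
  exact ⟨hdiv, hker, fun h => hker ▸ h⟩

/-- On a closed oriented surface of constant Gauss curvature `ε`, the operator
`L ξ = D (div ξ) + ½(−Δξ − εξ) + εξ` has kernel consisting exactly of the harmonic
1-forms (`div ξ = 0` and `curl ξ = 0`); in particular every `ξ ∈ ker L` is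
divergence-free, and `dim ker L = 2g` where `g` is the genus.  The geometric facts used in
the proof (divergence/curl identities, Hodge decomposition, the kernel of the scalar
Laplacian consisting of constants, the divergence theorem, and the eigenvalue equation for
harmonic 1-forms) are supplied as hypotheses; `intS` is the integral functional on scalar
fields, `Dperp f = ε_{AB} D^B f`. -/
theorem stmt_9 {Sc F : Type*} [AddCommGroup Sc] [Module ℝ Sc]
    [AddCommGroup F] [Module ℝ F]
    (ε : ℝ) (g : ℕ)
    (grad Dperp : Sc →ₗ[ℝ] F) (divF curl : F →ₗ[ℝ] Sc)
    (lapS : Sc →ₗ[ℝ] Sc) (lapF : F →ₗ[ℝ] F)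
    (intS : Sc →ₗ[ℝ] ℝ)
    (hdivgrad : ∀ f, divF (grad f) = lapS f)
    (hcurlgrad : ∀ f, curl (grad f) = 0)
    (hdivperp : ∀ f, divF (Dperp f) = 0)
    (hcurlperp : ∀ f, curl (Dperp f) = - lapS f)
    (hlapDperp : ∀ f, lapF (Dperp f) = Dperp (lapS f) + ε • Dperp f)
    (hharm : ∀ r, divF r = 0 → curl r = 0 → lapF r = ε • r)
    (hdivlap : ∀ ξ, divF (lapF ξ) = lapS (divF ξ) + ε • divF ξ)
    (hintdiv : ∀ ξ, intS (divF ξ) = 0)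
    (hintlap : ∀ f, intS (lapS f) = 0)
    (hconst : ∀ f, lapS f = 0 → intS f = 0 → f = 0)
    (hgradconst : ∀ f, lapS f = 0 → grad f = 0)
    (hHodge : ∀ ξ : F, ∃ ψ φ r, divF r = 0 ∧ curl r = 0 ∧ ξ = grad ψ + Dperp φ + r)
    (L : F →ₗ[ℝ] F)
    (hL : ∀ ξ, L ξ = grad (divF ξ) + (1 / 2 : ℝ) • (-(lapF ξ) - ε • ξ) + ε • ξ) :
    (∀ ξ, L ξ = 0 → divF ξ = 0)
    ∧ (LinearMap.ker L = LinearMap.ker divF ⊓ LinearMap.ker curl)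
    ∧ (Module.finrank ℝ ↥(LinearMap.ker divF ⊓ LinearMap.ker curl) = 2 * g →
        Module.finrank ℝ ↥(LinearMap.ker L) = 2 * g) :=
  stmt_9_general ε g grad Dperp divF curl lapS lapF intS hdivgrad hdivperp hcurlperp hlapDperp hharm
    hdivlap hintdiv hintlap hconst hgradconst hHodge L hL
end

section
/- Define ψ₁(s, r) = 2r²/(3s⁴) + 1/(3rs) and recursively ψ_{k+1}(s, r) = ∫_s^r ψ_k(y, r) ψ₁(s, y) dy for 0 < s ≤ r. Then for each k ≥ 1, ψ_k(s, r) is a polynomial in 1/s (with coefficients depending on r) whose coefficient of s^{-(k+3)} equals 2r²/((k−1)!(k+2)). -/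
/-!
By induction, `ψ k (·) r = ∑ a j s^{-j}` on `(0, r]` with `a 0 = a 2 = a 3 = 0`. Integrating
`y^{-j} ψ₁(s, y)` from `s` to `r` produces no logarithms because `j ≠ 0, 3`: the upper limit only
feeds the coefficients of `s^{-1}` and `s^{-4}`, and the lower limit sends `s^{-j}` to
`s^{-(j+1)}` with factor `(1 - j) / (j (3 - j))`. That factor vanishes at `j = 1`, which keeps
`a 2 = 0`, and at the top index `j = k + 3` it equals `(k + 2) / (k (k + 3))`, which turns
`2r²/((k-1)! (k+2))` into `2r²/(k! (k+3))`.
-/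

open Finset Set

noncomputable def psiOne (s y : ℝ) : ℝ := 2 * y ^ 2 / (3 * s ^ 4) + 1 / (3 * y * s)

-- `1/(3j) - 2/(3(3-j))`, from the lower limit of `∫_s^r y^{-j} ψ₁(s, y) dy`.
noncomputable def shiftCoeff (j : ℕ) : ℝ := (1 - j) / (j * (3 - j))

theorem zpow_neg_natCast_mul_psiOne {s y : ℝ} (hs : s ≠ 0) (hy : y ≠ 0) (j : ℕ) :
    y ^ (-(j : ℤ)) * psiOne s y
      = 2 / (3 * s ^ 4) * y ^ (2 - j : ℤ) + 1 / (3 * s) * y ^ (-1 - j : ℤ) := by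
  rw [psiOne, sub_eq_add_neg, sub_eq_add_neg, zpow_add₀ hy, zpow_add₀ hy]
  field_simp

theorem integral_zpow_neg_natCast_mul_psiOne {r s : ℝ} (hs : 0 < s) (hr : 0 < r) {j : ℕ}
    (hj0 : j ≠ 0) (hj3 : j ≠ 3) :
    ∫ y in s..r, y ^ (-(j : ℤ)) * psiOne s y
      = 2 * r ^ (3 - j : ℤ) / (3 * (3 - j)) * s ^ (-4 : ℤ)
        - r ^ (-(j : ℤ)) / (3 * j) * s ^ (-1 : ℤ) + shiftCoeff j * s ^ (-((j : ℤ) + 1)) := by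
  have h0 : (0 : ℝ) ∉ uIcc s r := notMem_uIcc_of_lt hs hr
  have hzpow (m : ℤ) : IntervalIntegrable (fun y : ℝ => y ^ m) MeasureTheory.volume s r :=
    intervalIntegral.intervalIntegrable_zpow (Or.inr h0)
  rw [intervalIntegral.integral_congr (g := fun y => 2 / (3 * s ^ 4) * y ^ (2 - j : ℤ)
      + 1 / (3 * s) * y ^ (-1 - j : ℤ))
    fun y hy => zpow_neg_natCast_mul_psiOne hs.ne' (ne_of_mem_of_not_mem hy h0) j,
    intervalIntegral.integral_add ((hzpow _).const_mul _) ((hzpow _).const_mul _),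
    intervalIntegral.integral_const_mul, intervalIntegral.integral_const_mul,
    integral_zpow (Or.inr ⟨by omega, h0⟩), integral_zpow (Or.inr ⟨by omega, h0⟩)]
  have e3 : (2 - j + 1 : ℤ) = 3 + -(j : ℤ) := by ring
  have e0 : (-1 - j + 1 : ℤ) = -(j : ℤ) := by ring
  have hjR : (j : ℝ) ≠ 0 := by exact_mod_cast hj0
  have hj3R : (3 : ℝ) - j ≠ 0 := sub_ne_zero.mpr (by exact_mod_cast hj3.symm)
  rw [e3, e0, zpow_add₀ hr.ne', zpow_add₀ hs.ne', neg_add, zpow_add₀ hs.ne', zpow_neg s 4,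
    zpow_neg_one]
  push_cast
  rw [show (2 : ℝ) - j + 1 = 3 - j by ring, show (-1 : ℝ) - j + 1 = -j by ring,
    sub_eq_add_neg (3 : ℤ), zpow_add₀ hr.ne', shiftCoeff]
  generalize s ^ (-(j : ℤ)) = t
  generalize r ^ (-(j : ℤ)) = u
  field_simp
  ring

-- Coefficients of `∫_s^r (∑_{i<n} a i y^{-i}) ψ₁(s, y) dy` as a polynomial in `1/s`.
noncomputable def nextCoeff (r : ℝ) (n : ℕ) (a : ℕ → ℝ) : ℕ → ℝ
  | 0 => 0
  | j + 1 => shiftCoeff j * a j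
      + (if j = 0 then -∑ i ∈ range n, a i * r ^ (-(i : ℤ)) / (3 * i) else 0)
      + (if j = 3 then ∑ i ∈ range n, a i * (2 * r ^ (3 - i : ℤ) / (3 * (3 - i))) else 0)

theorem sum_nextCoeff_mul_zpow (r s : ℝ) {n : ℕ} (hn : 4 ≤ n) (a : ℕ → ℝ) :
    ∑ i ∈ range (n + 1), nextCoeff r n a i * s ^ (-(i : ℤ))
      = ∑ j ∈ range n, a j * (2 * r ^ (3 - j : ℤ) / (3 * (3 - j)) * s ^ (-4 : ℤ)
        - r ^ (-(j : ℤ)) / (3 * j) * s ^ (-1 : ℤ) + shiftCoeff j * s ^ (-((j : ℤ) + 1))) := by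
  have h0 : 0 ∈ range n := mem_range.mpr (by omega)
  have h3 : 3 ∈ range n := mem_range.mpr (by omega)
  simp only [sum_range_succ', nextCoeff, add_mul, ite_mul, zero_mul, sum_add_distrib,
    sum_ite_eq', if_pos h0, if_pos h3, add_zero]
  rw [neg_mul, sum_mul, sum_mul, ← sum_neg_distrib, ← sum_add_distrib, ← sum_add_distrib]
  refine sum_congr rfl fun j _ => ?_
  push_cast
  ring

theorem integral_mul_psiOne_eq_sum {r s : ℝ} (hs : 0 < s) (hsr : s ≤ r) {f : ℝ → ℝ} {n : ℕ}
    {a : ℕ → ℝ} (hf : ∀ y ∈ Ioc 0 r, f y = ∑ j ∈ range n, a j * y ^ (-(j : ℤ)))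
    (ha0 : a 0 = 0) (ha3 : a 3 = 0) (hn : 4 ≤ n) :
    ∫ y in s..r, f y * psiOne s y = ∑ i ∈ range (n + 1), nextCoeff r n a i * s ^ (-(i : ℤ)) := by
  have h0 : (0 : ℝ) ∉ uIcc s r := notMem_uIcc_of_lt hs (hs.trans_le hsr)
  have hint (j : ℕ) :
      IntervalIntegrable (fun y => y ^ (-(j : ℤ)) * psiOne s y) MeasureTheory.volume s r := by
    refine ContinuousOn.intervalIntegrable fun y hy => ?_
    have hy : y ≠ 0 := ne_of_mem_of_not_mem hy h0
    unfold psiOne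
    fun_prop (disch := simp [hy, hs.ne'])
  calc ∫ y in s..r, f y * psiOne s y
      = ∫ y in s..r, ∑ j ∈ range n, a j * (y ^ (-(j : ℤ)) * psiOne s y) := by
        refine intervalIntegral.integral_congr fun y hy => ?_
        rw [uIcc_of_le hsr] at hy
        simp only [hf y ⟨hs.trans_le hy.1, hy.2⟩, sum_mul, mul_assoc]
    _ = ∑ j ∈ range n, a j * ∫ y in s..r, y ^ (-(j : ℤ)) * psiOne s y := by
        rw [intervalIntegral.integral_finsetSum fun j _ => (hint j).const_mul (a j)]
        simp only [intervalIntegral.integral_const_mul]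
    _ = ∑ j ∈ range n, a j * (2 * r ^ (3 - j : ℤ) / (3 * (3 - j)) * s ^ (-4 : ℤ)
        - r ^ (-(j : ℤ)) / (3 * j) * s ^ (-1 : ℤ) + shiftCoeff j * s ^ (-((j : ℤ) + 1))) := by
        refine sum_congr rfl fun j _ => ?_
        obtain rfl | hj0 := eq_or_ne j 0
        · simp [ha0]
        obtain rfl | hj3 := eq_or_ne j 3
        · simp [ha3]
        rw [integral_zpow_neg_natCast_mul_psiOne hs (hs.trans_le hsr) hj0 hj3]
    _ = _ := (sum_nextCoeff_mul_zpow r s hn a).symm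

theorem shiftCoeff_one : shiftCoeff 1 = 0 := by simp [shiftCoeff]

theorem shiftCoeff_add_four (m : ℕ) : shiftCoeff (m + 4) = (m + 3) / ((m + 4) * (m + 1)) := by
  rw [shiftCoeff, div_eq_div_iff (by push_cast; nlinarith) (by positivity)]
  push_cast
  ring

theorem nextCoeff_two (r : ℝ) (n : ℕ) (a : ℕ → ℝ) : nextCoeff r n a 2 = 0 := by
  simp [nextCoeff, shiftCoeff_one]

theorem nextCoeff_three (r : ℝ) (n : ℕ) {a : ℕ → ℝ} (ha2 : a 2 = 0) : nextCoeff r n a 3 = 0 := by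
  simp [nextCoeff, ha2]

theorem nextCoeff_succ (r : ℝ) (n : ℕ) (a : ℕ → ℝ) {j : ℕ} (hj0 : j ≠ 0) (hj3 : j ≠ 3) :
    nextCoeff r n a (j + 1) = shiftCoeff j * a j := by
  simp [nextCoeff, hj0, hj3]

theorem exists_psi_coeff (r : ℝ) (ψ : ℕ → ℝ → ℝ → ℝ) (hbase : ∀ s y, ψ 1 s y = psiOne s y)
    (hrec : ∀ k, 1 ≤ k → ∀ s r', ψ (k + 1) s r' = ∫ y in s..r', ψ k y r' * ψ 1 s y) (m : ℕ) :
    ∃ a : ℕ → ℝ, (∀ s ∈ Ioc (0 : ℝ) r,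
        ψ (m + 1) s r = ∑ j ∈ range (m + 5), a j * s ^ (-(j : ℤ)))
      ∧ a 0 = 0 ∧ a 2 = 0 ∧ a 3 = 0 ∧ a (m + 4) = 2 * r ^ 2 / (m.factorial * (m + 3)) := by
  induction m with
  | zero =>
    refine ⟨fun j => if j = 4 then 2 * r ^ 2 / 3 else if j = 1 then 1 / (3 * r) else 0,
      fun s hs => ?_, by simp, by simp, by simp, by norm_num⟩
    have hs0 : s ≠ 0 := hs.1.ne'
    simp only [hbase, psiOne, sum_range_succ, sum_range_zero]
    norm_num
    field_simp
    ring
  | succ m ih =>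
    obtain ⟨a, ha, ha0, ha2, ha3, htop⟩ := ih
    refine ⟨nextCoeff r (m + 5) a, fun s ⟨hs, hsr⟩ => ?_, rfl,
      nextCoeff_two r _ a, nextCoeff_three r _ ha2, ?_⟩
    · rw [hrec (m + 1) (by omega), funext (hbase s)]
      exact integral_mul_psiOne_eq_sum hs hsr ha ha0 ha3 (by omega)
    · rw [nextCoeff_succ r _ a (by omega) (by omega), htop, shiftCoeff_add_four,
        Nat.factorial_succ]
      push_cast
      field_simp
      ring

theorem stmt_14_general (r : ℝ) (ψ : ℕ → ℝ → ℝ → ℝ)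
    (hbase : ∀ s r', ψ 1 s r' = 2 * r' ^ 2 / (3 * s ^ 4) + 1 / (3 * r' * s))
    (hrec : ∀ k, 1 ≤ k → ∀ s r', ψ (k + 1) s r' = ∫ y in s..r', ψ k y r' * ψ 1 s y) :
    ∀ k, 1 ≤ k → ∃ a : ℕ → ℝ,
      (∀ s ∈ Set.Ioc (0 : ℝ) r,
        ψ k s r = ∑ j ∈ Finset.range (k + 4), a j * s ^ (-(j : ℤ)))
      ∧ a (k + 3) = 2 * r ^ 2 / (((k - 1).factorial : ℝ) * ((k : ℝ) + 2)) := by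
  intro k hk
  obtain ⟨m, rfl⟩ := Nat.exists_eq_add_of_le' hk
  obtain ⟨a, ha, -, -, -, htop⟩ := exists_psi_coeff r ψ hbase hrec m
  refine ⟨a, ha, ?_⟩
  rw [htop, Nat.add_sub_cancel]
  push_cast
  ring

/-- Let `ψ 1 s r = 2r²/(3s⁴) + 1/(3rs)` and recursively
`ψ (k+1) s r = ∫_s^r ψ k y r · ψ 1 s y dy`.  Then for each `k ≥ 1`, on `(0, r]` the
kernel `ψ k (·) r` is a polynomial in `1/s` (with coefficients depending on `r`) of degree
at most `k + 3`, whose coefficient of `s^{-(k+3)}` equals `2r²/((k−1)!(k+2))`. -/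
theorem stmt_14 (r : ℝ) (hr : 0 < r) (ψ : ℕ → ℝ → ℝ → ℝ)
    (hbase : ∀ s r', ψ 1 s r' = 2 * r' ^ 2 / (3 * s ^ 4) + 1 / (3 * r' * s))
    (hrec : ∀ k, 1 ≤ k → ∀ s r', ψ (k + 1) s r' = ∫ y in s..r', ψ k y r' * ψ 1 s y) :
    ∀ k, 1 ≤ k → ∃ a : ℕ → ℝ,
      (∀ s ∈ Set.Ioc (0 : ℝ) r,
        ψ k s r = ∑ j ∈ Finset.range (k + 4), a j * s ^ (-(j : ℤ)))
      ∧ a (k + 3) = 2 * r ^ 2 / (((k - 1).factorial : ℝ) * ((k : ℝ) + 2)) :=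
  stmt_14_general r ψ hbase hrec
end

section
/- On the unit round sphere, the vector field D^A((P + 2)h)_{AB}, for h a symmetric trace-free 2-tensor expanded in tensor harmonics, equals −∑_{ℓ≥2,|m|≤ℓ} (½ℓ(ℓ+1) − 3)(½ℓ(ℓ+1) − 1)^{1/2} (h_ψ^{(ℓm)} E^{(ℓm)}_B + h_φ^{(ℓm)} H^{(ℓm)}_B). Consequently the L²-orthogonal complement of the image of the operator h ↦ div₂((P+2)h) is spanned by the vector spherical harmonics with ℓ = 1 and ℓ = 2. -/
theorem stmt_18_general {F T : Type*} [AddCommGroup F] [Module ℝ F] [AddCommGroup T] [Module ℝ T]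
    (ℓ : ℕ)
    (Cop : F →ₗ[ℝ] T) (div2 : T →ₗ[ℝ] F)
    (μ : ℝ) (hμ : μ = (ℓ : ℝ) * ((ℓ : ℝ) + 1) / 2 - 1)
    (h : T) (E : F)
    (hPh : Cop (div2 h) = -μ • h)
    (hdivh : div2 h = Real.sqrt μ • E) :
    (div2 (Cop (div2 h) + (2 : ℝ) • h)
        = -(((ℓ : ℝ) * ((ℓ : ℝ) + 1) / 2 - 3) * Real.sqrt μ) • E)
    ∧ (ℓ = 2 → div2 (Cop (div2 h) + (2 : ℝ) • h) = 0) := by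
  have key : div2 (Cop (div2 h) + (2 : ℝ) • h)
      = -(((ℓ : ℝ) * ((ℓ : ℝ) + 1) / 2 - 3) * Real.sqrt μ) • E := by
    rw [hPh, ← add_smul, map_smul, hdivh, smul_smul]
    congr 1
    rw [hμ]
    ring
  refine ⟨key, fun hℓ₂ => ?_⟩
  rw [key, hℓ₂]
  norm_num

/-- On the unit round sphere, for a mode-`ℓ` tensor harmonic `h` (i.e.
`P h = −μ h` with `μ = ½ℓ(ℓ+1) − 1` and `div₂ h = √μ E` for the corresponding vector
harmonic `E`), the vector field `div₂ ((P + 2) h)` equals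
`−(½ℓ(ℓ+1) − 3) √μ E`; consequently it vanishes for `ℓ = 2`, so the `L²`-orthogonal
complement of the image of `h ↦ div₂ ((P+2)h)` is spanned by the vector harmonics with
`ℓ = 1` and `ℓ = 2`. -/
theorem stmt_18 {F T : Type*} [AddCommGroup F] [Module ℝ F] [AddCommGroup T] [Module ℝ T]
    (ℓ : ℕ) (hℓ : 2 ≤ ℓ)
    (Cop : F →ₗ[ℝ] T) (div2 : T →ₗ[ℝ] F)
    (μ : ℝ) (hμ : μ = (ℓ : ℝ) * ((ℓ : ℝ) + 1) / 2 - 1)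
    (h : T) (E : F)
    (hPh : Cop (div2 h) = -μ • h)
    (hdivh : div2 h = Real.sqrt μ • E) :
    (div2 (Cop (div2 h) + (2 : ℝ) • h)
        = -(((ℓ : ℝ) * ((ℓ : ℝ) + 1) / 2 - 3) * Real.sqrt μ) • E)
    ∧ (ℓ = 2 → div2 (Cop (div2 h) + (2 : ℝ) • h) = 0) :=
  stmt_18_general ℓ Cop div2 μ hμ h E hPh hdivh
end
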